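/- arXiv:2412.05157 — 4 statements merged into one kernel-verified Lean document; each statement's English description precedes it below -/
import Mathlib

section
/- For every d ≥ 2 there is a constant C = C(d) such that the following holds. Let P be a finite set of points and H a finite set of hyperplanes in ℝ^d, and let ℓ ≥ 1 be an integer such that no (d−2)-flat contains more than ℓ points of P. Then the number of incidences I(P,H) = |{(p,h) ∈ P×H : p ∈ h}| satisfies I(P,H) ≤ C·(|H|·|P|^{1/2}·ℓ^{1/2} + |P|). -/
open Finset Module

local notation "E" d => EuclideanSpace ℝ (Fin d)

lemma aux_dir {d : ℕ} (hd : 2 ≤ d) (h1 h2 : AffineSubspace ℝ (E d)) (hne : h1 ≠ h2)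
    (r1 : finrank ℝ h1.direction = d - 1) (r2 : finrank ℝ h2.direction = d - 1)
    {p : E d} (hp1 : p ∈ h1) (hp2 : p ∈ h2) :
    finrank ℝ (h1 ⊓ h2).direction = d - 2 := by
  rw [AffineSubspace.direction_inf_of_mem hp1 hp2]
  set U := h1.direction
  set V := h2.direction
  have hUV : U ≠ V := by
    intro h
    exact hne (AffineSubspace.ext_of_direction_eq h ⟨p, hp1, hp2⟩)
  have htot : finrank ℝ (E d) = d := finrank_euclideanSpace_fin
  have hsum : finrank ℝ ↥(U ⊔ V) + finrank ℝ ↥(U ⊓ V) = finrank ℝ U + finrank ℝ V :=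
    Submodule.finrank_sup_add_finrank_inf_eq U V
  have hsup_le : finrank ℝ ↥(U ⊔ V) ≤ d :=
    le_trans (Submodule.finrank_le _) (le_of_eq htot)
  have hUle : finrank ℝ U ≤ finrank ℝ ↥(U ⊔ V) :=
    Submodule.finrank_mono le_sup_left
  have hsupne : finrank ℝ ↥(U ⊔ V) ≠ d - 1 := by
    intro h
    have hIU : finrank ℝ ↥(U ⊓ V) = d - 1 := by omega
    have e1 : (U ⊓ V) = U := Submodule.eq_of_le_of_finrank_eq inf_le_left (by rw [hIU, r1])
    have e2 : (U ⊓ V) = V := Submodule.eq_of_le_of_finrank_eq inf_le_right (by rw [hIU, r2])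
    exact hUV (e1 ▸ e2)
  omega

set_option maxHeartbeats 2000000 in
/-- **Lemma (Kővári–Sós–Turán incidence bound).** For every `d ≥ 2` there is a constant
`C = C(d)` such that for finite sets `P` of points and `H` of hyperplanes in `ℝ^d`, if no
`(d-2)`-flat contains more than `ℓ` points of `P` (`ℓ ≥ 1`), then the number of incidences
satisfies `I(P,H) ≤ C·(|H|·|P|^{1/2}·ℓ^{1/2} + |P|)`. -/
theorem stmt_1 (d : ℕ) (hd : 2 ≤ d) :
    ∃ C : ℝ, 0 < C ∧
      ∀ (P : Finset (EuclideanSpace ℝ (Fin d)))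
        (H : Finset (AffineSubspace ℝ (EuclideanSpace ℝ (Fin d)))) (ℓ : ℕ),
        1 ≤ ℓ →
        (∀ h ∈ H, Module.finrank ℝ h.direction = d - 1) →
        (∀ f : AffineSubspace ℝ (EuclideanSpace ℝ (Fin d)),
          Module.finrank ℝ f.direction = d - 2 →
          ((P : Set (EuclideanSpace ℝ (Fin d))) ∩ (f : Set (EuclideanSpace ℝ (Fin d)))).ncard ≤ ℓ) →
        (({ph : EuclideanSpace ℝ (Fin d) × AffineSubspace ℝ (EuclideanSpace ℝ (Fin d)) |
            ph.1 ∈ P ∧ ph.2 ∈ H ∧ ph.1 ∈ ph.2}.ncard : ℝ) ≤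
          C * ((H.card : ℝ) * Real.sqrt (P.card : ℝ) * Real.sqrt (ℓ : ℝ) + (P.card : ℝ))) := by
  classical
  refine ⟨2, by norm_num, ?_⟩
  intro P H ℓ hℓ hH hflat
  set T : Finset ((E d) × AffineSubspace ℝ (E d)) :=
    (P ×ˢ H).filter (fun ph => ph.1 ∈ ph.2) with hTdef
  have hS : {ph : (E d) × AffineSubspace ℝ (E d) |
      ph.1 ∈ P ∧ ph.2 ∈ H ∧ ph.1 ∈ ph.2}.ncard = T.card := by
    rw [← Set.ncard_coe_finset]
    congr 1
    ext ph
    simp [hTdef, and_assoc]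
  set m : (E d) → ℕ := fun p => (H.filter (fun h => p ∈ h)).card with hmdef
  -- incidence count as a sum
  have hI : T.card = ∑ p ∈ P, m p := by
    rw [hTdef, Finset.card_filter, Finset.sum_product]
    exact Finset.sum_congr rfl fun p _ => (Finset.card_filter _ _).symm
  -- pairwise bound
  have hpair : ∀ h1 ∈ H, ∀ h2 ∈ H, h1 ≠ h2 →
      (P.filter (fun p => p ∈ h1 ∧ p ∈ h2)).card ≤ ℓ := by
    intro h1 hh1 h2 hh2 hne
    by_cases hex : ∃ p : E d, p ∈ h1 ∧ p ∈ h2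
    · obtain ⟨q, hq1, hq2⟩ := hex
      have hrank := aux_dir hd h1 h2 hne (hH h1 hh1) (hH h2 hh2) hq1 hq2
      have hb := hflat (h1 ⊓ h2) hrank
      have heq : ((P : Set (E d)) ∩ ((h1 ⊓ h2 : AffineSubspace ℝ (E d)) : Set (E d)))
          = ↑(P.filter (fun p => p ∈ h1 ∧ p ∈ h2)) := by
        ext x
        simp only [Finset.coe_filter, Set.mem_inter_iff, Set.mem_setOf_eq,
          Finset.mem_coe, SetLike.mem_coe, AffineSubspace.mem_inf_iff]
      rw [heq, Set.ncard_coe_finset] at hb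
      exact hb
    · have : P.filter (fun p => p ∈ h1 ∧ p ∈ h2) = ∅ := by
        apply Finset.filter_eq_empty_iff.mpr
        intro p _ hp
        exact hex ⟨p, hp⟩
      simp [this]
  -- sum of squares bound
  have hsq : ∑ p ∈ P, m p ^ 2 ≤ ℓ * (H.card * H.card) + ∑ p ∈ P, m p := by
    have expand : ∑ p ∈ P, m p ^ 2
        = ∑ h1 ∈ H, ∑ h2 ∈ H, (P.filter (fun p => p ∈ h1 ∧ p ∈ h2)).card := by
      have : ∀ p, m p ^ 2 = ∑ h1 ∈ H, ∑ h2 ∈ H,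
          (if p ∈ h1 ∧ p ∈ h2 then 1 else 0) := by
        intro p
        rw [hmdef]
        simp only [Finset.card_filter, sq, Finset.sum_mul_sum]
        refine Finset.sum_congr rfl fun h1 _ => Finset.sum_congr rfl fun h2 _ => ?_
        by_cases e1 : p ∈ h1 <;> by_cases e2 : p ∈ h2 <;> simp [e1, e2]
      simp_rw [this]
      rw [Finset.sum_comm]
      refine Finset.sum_congr rfl fun h1 _ => ?_
      rw [Finset.sum_comm]
      exact Finset.sum_congr rfl fun h2 _ => (Finset.card_filter _ _).symm
    have diag : ∑ h ∈ H, (P.filter (fun p => p ∈ h ∧ p ∈ h)).card = ∑ p ∈ P, m p := by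
      simp_rw [and_self]
      rw [hmdef]
      simp_rw [Finset.card_filter]
      rw [Finset.sum_comm]
    calc ∑ p ∈ P, m p ^ 2
        = ∑ h1 ∈ H, ∑ h2 ∈ H, (P.filter (fun p => p ∈ h1 ∧ p ∈ h2)).card := expand
      _ ≤ ∑ h1 ∈ H, ∑ h2 ∈ H,
            ((if h1 = h2 then (P.filter (fun p => p ∈ h1 ∧ p ∈ h2)).card else 0) + ℓ) := by
          refine Finset.sum_le_sum fun h1 hh1 => Finset.sum_le_sum fun h2 hh2 => ?_
          by_cases he : h1 = h2
          · simp [he]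
          · simpa [he] using hpair h1 hh1 h2 hh2 he
      _ = (∑ h1 ∈ H, ∑ h2 ∈ H,
            (if h1 = h2 then (P.filter (fun p => p ∈ h1 ∧ p ∈ h2)).card else 0))
            + H.card * (H.card * ℓ) := by
          simp only [Finset.sum_add_distrib, Finset.sum_const, smul_eq_mul, mul_one]
          try ring
      _ ≤ (∑ h1 ∈ H, (P.filter (fun p => p ∈ h1 ∧ p ∈ h1)).card) + H.card * (H.card * ℓ) := by
          gcongr with h1 hh1
          rw [Finset.sum_ite_eq H h1 (fun h2 => (P.filter (fun p => p ∈ h1 ∧ p ∈ h2)).card)]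
          simp [hh1]
      _ = (∑ p ∈ P, m p) + H.card * (H.card * ℓ) := by rw [diag]
      _ = ℓ * (H.card * H.card) + ∑ p ∈ P, m p := by ring
  -- Cauchy-Schwarz
  have hcs : (∑ p ∈ P, m p) ^ 2 ≤ P.card * ∑ p ∈ P, m p ^ 2 :=
    sq_sum_le_card_mul_sum_sq
  -- move to ℝ
  set Ic : ℝ := (T.card : ℝ) with hIc
  have hmain : Ic ^ 2 ≤ (P.card : ℝ) * ((ℓ : ℝ) * ((H.card : ℝ) * (H.card : ℝ)) + Ic) := by
    have h1 : ((∑ p ∈ P, m p : ℕ) : ℝ) ^ 2 ≤ (P.card : ℝ) * ((∑ p ∈ P, m p ^ 2 : ℕ) : ℝ) := by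
      exact_mod_cast hcs
    have h2 : ((∑ p ∈ P, m p ^ 2 : ℕ) : ℝ)
        ≤ (ℓ : ℝ) * ((H.card : ℝ) * (H.card : ℝ)) + ((∑ p ∈ P, m p : ℕ) : ℝ) := by
      exact_mod_cast hsq
    have hIeq : Ic = ((∑ p ∈ P, m p : ℕ) : ℝ) := by rw [hIc, hI]
    rw [hIeq]
    calc ((∑ p ∈ P, m p : ℕ) : ℝ) ^ 2 ≤ (P.card : ℝ) * ((∑ p ∈ P, m p ^ 2 : ℕ) : ℝ) := h1
      _ ≤ (P.card : ℝ) * ((ℓ : ℝ) * ((H.card : ℝ) * (H.card : ℝ)) + ((∑ p ∈ P, m p : ℕ) : ℝ)) := by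
          gcongr
  rw [hS]
  rw [← hIc]
  set Pc : ℝ := (P.card : ℝ)
  set Hc : ℝ := (H.card : ℝ)
  set Lc : ℝ := (ℓ : ℝ)
  have hPc : 0 ≤ Pc := Nat.cast_nonneg _
  have hHc : 0 ≤ Hc := Nat.cast_nonneg _
  have hLc : 0 ≤ Lc := Nat.cast_nonneg _
  have hIc0 : 0 ≤ Ic := Nat.cast_nonneg _
  have hsP : Real.sqrt Pc * Real.sqrt Pc = Pc := Real.mul_self_sqrt hPc
  have hsL : Real.sqrt Lc * Real.sqrt Lc = Lc := Real.mul_self_sqrt hLc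
  have hsP0 : 0 ≤ Real.sqrt Pc := Real.sqrt_nonneg _
  have hsL0 : 0 ≤ Real.sqrt Lc := Real.sqrt_nonneg _
  by_cases hcase : Ic ≤ 2 * Pc
  · have h0 : 0 ≤ Hc * Real.sqrt Pc * Real.sqrt Lc := by positivity
    linarith
  · push_neg at hcase
    have h2 : 2 * Pc * Ic ≤ Ic * Ic := by nlinarith
    have hkey : Ic ^ 2 ≤ 2 * (Pc * (Lc * (Hc * Hc))) := by nlinarith
    set B := 2 * (Hc * Real.sqrt Pc * Real.sqrt Lc) with hBdef
    have hB0 : 0 ≤ B := by positivity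
    have e1 : Real.sqrt Pc ^ 2 = Pc := Real.sq_sqrt hPc
    have e2 : Real.sqrt Lc ^ 2 = Lc := Real.sq_sqrt hLc
    have hBsq : B ^ 2 = 4 * ((Hc * Hc) * (Pc * Lc)) := by
      rw [hBdef, mul_pow, mul_pow, mul_pow, e1, e2]; ring
    have hsq2 : Ic ^ 2 ≤ B ^ 2 := by
      rw [hBsq]
      nlinarith [mul_nonneg (mul_nonneg hPc hLc) (mul_nonneg hHc hHc)]
    have hIB : Ic ≤ B := by
      have h1 : Real.sqrt (Ic ^ 2) ≤ Real.sqrt (B ^ 2) := Real.sqrt_le_sqrt hsq2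
      rwa [Real.sqrt_sq hIc0, Real.sqrt_sq hB0] at h1
    linarith
end

section
/- Let d ≥ t ≥ 3, let P be a finite set of points in ℝ^d such that every (t−2)-flat contains at most k−1 points of P with k ≥ t, and let V be the (finite) set of all (t−1)-flats in ℝ^d spanned by t affinely independent points of P. Let φ: ℝ^d → ℝ^t be an orthogonal projection onto a generic t-dimensional subspace, meaning that φ is injective on P and φ(F) is a (t−1)-flat in ℝ^t for every F ∈ V. If G is a (t−2)-flat in ℝ^t, then the set P′ = P ∩ φ^{−1}(G) is contained in a (t−2)-flat of ℝ^d. -/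
open Module

/-- Extend a submodule to one of any prescribed finrank. -/
lemma exists_superset_finrank_eq {K V : Type*} [Field K] [AddCommGroup V] [Module K V]
    [FiniteDimensional K V] (D : Submodule K V) (n : ℕ) (h1 : finrank K D ≤ n)
    (h2 : n ≤ finrank K V) : ∃ W : Submodule K V, D ≤ W ∧ finrank K W = n := by
  induction n, h1 using Nat.le_induction with
  | base => exact ⟨D, le_rfl, rfl⟩
  | succ n hn ih =>
    obtain ⟨W, hDW, hW⟩ := ih (le_of_lt (Nat.lt_of_succ_le h2))
    obtain ⟨m, hm⟩ := W.exists_of_finrank_lt (by omega)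
    have hmW : m ∉ W := by simpa using hm 1 one_ne_zero
    have hm0 : m ≠ 0 := fun h => hmW (h ▸ W.zero_mem)
    refine ⟨W ⊔ Submodule.span K {m}, le_trans hDW le_sup_left, ?_⟩
    have hinf : W ⊓ Submodule.span K {m} = ⊥ := by
      rw [Submodule.eq_bot_iff]
      rintro x ⟨hxW, hxm⟩
      obtain ⟨r, rfl⟩ := Submodule.mem_span_singleton.mp hxm
      by_contra hx
      exact hm r (fun hr => hx (by simp [hr])) hxW
    have := Submodule.finrank_sup_add_finrank_inf_eq W (Submodule.span K {m})
    rw [hinf, finrank_bot, finrank_span_singleton hm0] at this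
    omega

open Module in


/-- **Projection step.** Let `d ≥ t ≥ 3`, let `P ⊆ ℝ^d` be finite with every `(t-2)`-flat
containing at most `k-1` points of `P` (`k ≥ t`), and let `V` be the set of `(t-1)`-flats
spanned by `t` affinely independent points of `P`.  Let `φ : ℝ^d → ℝ^t` be a generic
(orthogonal) projection, i.e. an affine map that is injective on `P` and maps every flat of
`V` to a `(t-1)`-flat of `ℝ^t`.  If `G` is a `(t-2)`-flat in `ℝ^t`, then
`P' = P ∩ φ⁻¹(G)` is contained in a `(t-2)`-flat of `ℝ^d`. -/
theorem stmt_9 (d t k : ℕ) (ht : 3 ≤ t) (htd : t ≤ d) (hk : t ≤ k)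
    (P : Finset (EuclideanSpace ℝ (Fin d)))
    (hP : ∀ f : AffineSubspace ℝ (EuclideanSpace ℝ (Fin d)),
      Module.finrank ℝ f.direction = t - 2 →
      ((P : Set (EuclideanSpace ℝ (Fin d))) ∩ (f : Set (EuclideanSpace ℝ (Fin d)))).ncard ≤ k - 1)
    (φ : EuclideanSpace ℝ (Fin d) →ᵃ[ℝ] EuclideanSpace ℝ (Fin t))
    (hinj : Set.InjOn φ (P : Set (EuclideanSpace ℝ (Fin d))))
    (hgen : ∀ s : Finset (EuclideanSpace ℝ (Fin d)),
      s ⊆ P → s.card = t →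
      AffineIndependent ℝ (fun p : s => (p : EuclideanSpace ℝ (Fin d))) →
      Module.finrank ℝ
        ((affineSpan ℝ (s : Set (EuclideanSpace ℝ (Fin d)))).map φ).direction = t - 1)
    (G : AffineSubspace ℝ (EuclideanSpace ℝ (Fin t)))
    (hG : Module.finrank ℝ G.direction = t - 2) :
    ∃ W : AffineSubspace ℝ (EuclideanSpace ℝ (Fin d)),
      Module.finrank ℝ W.direction = t - 2 ∧
      {p : EuclideanSpace ℝ (Fin d) | p ∈ P ∧ φ p ∈ G} ⊆ (W : Set (EuclideanSpace ℝ (Fin d))) := by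
  classical
  set S : Set (EuclideanSpace ℝ (Fin d)) := {p | p ∈ P ∧ φ p ∈ G} with hSdef
  have htop : finrank ℝ (EuclideanSpace ℝ (Fin d)) = d := finrank_euclideanSpace_fin
  have htd2 : t - 2 ≤ finrank ℝ (EuclideanSpace ℝ (Fin d)) := by omega
  -- Step 1: the affine span of S has dimension ≤ t - 2
  have hdim : finrank ℝ (affineSpan ℝ S).direction ≤ t - 2 := by
    by_contra h
    push_neg at h
    obtain ⟨I, hIS, hspan, hindep⟩ := exists_affineIndependent ℝ (EuclideanSpace ℝ (Fin d)) S
    have hIfin : I.Finite := (P.finite_toSet.subset (fun p hp => (hIS hp).1))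
    have : Fintype I := hIfin.fintype
    have hne : Nonempty I := by
      by_contra hI
      rw [not_nonempty_iff] at hI
      have : I = ∅ := Set.eq_empty_iff_forall_notMem.mpr (fun x hx => hI.false ⟨x, hx⟩)
      rw [this, AffineSubspace.span_empty] at hspan
      rw [← hspan, AffineSubspace.direction_bot, finrank_bot] at h
      omega
    have hcard : finrank ℝ (vectorSpan ℝ (Set.range ((↑) : I → EuclideanSpace ℝ (Fin d)))) + 1
        = Fintype.card I := hindep.finrank_vectorSpan_add_one
    rw [Subtype.range_coe] at hcard
    have hdir : (affineSpan ℝ I).direction = vectorSpan ℝ I := direction_affineSpan ℝ I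
    have hIcard : t ≤ Fintype.card I := by
      rw [← hcard, ← hdir, hspan]; omega
    have : t ≤ hIfin.toFinset.card := by rw [Set.Finite.card_toFinset]; exact hIcard
    obtain ⟨s, hsI, hscard⟩ := Finset.exists_subset_card_eq this
    have hsI' : (s : Set (EuclideanSpace ℝ (Fin d))) ⊆ I := fun x hx =>
      hIfin.mem_toFinset.mp (hsI hx)
    have hsP : s ⊆ P := fun x hx => (hIS (hsI' hx)).1
    have hsindep : AffineIndependent ℝ (fun p : s => (p : EuclideanSpace ℝ (Fin d))) := by
      have := hindep.comp_embedding
        ⟨Set.inclusion hsI', Set.inclusion_injective hsI'⟩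
      exact this
    have hmap := hgen s hsP hscard hsindep
    have hle : (affineSpan ℝ (s : Set (EuclideanSpace ℝ (Fin d)))).map φ ≤ G := by
      rw [AffineSubspace.map_span]
      apply affineSpan_le.mpr
      rintro y ⟨x, hx, rfl⟩
      exact (hIS (hsI' hx)).2
    have := Submodule.finrank_mono (AffineSubspace.direction_le hle)
    rw [hmap, hG] at this
    omega
  -- Step 2: extend to an exact (t-2)-flat
  rcases S.eq_empty_or_nonempty with hSe | ⟨p, hp⟩
  · obtain ⟨W', hW'le, hW'⟩ := exists_superset_finrank_eq
      (⊥ : Submodule ℝ (EuclideanSpace ℝ (Fin d))) (t - 2) (by simp) htd2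
    refine ⟨AffineSubspace.mk' 0 W', ?_, ?_⟩
    · rw [AffineSubspace.direction_mk']; exact hW'
    · rw [hSe]; exact Set.empty_subset _
  · obtain ⟨W', hW'le, hW'⟩ := exists_superset_finrank_eq
      (affineSpan ℝ S).direction (t - 2) hdim htd2
    refine ⟨AffineSubspace.mk' p W', ?_, ?_⟩
    · rw [AffineSubspace.direction_mk']; exact hW'
    · intro q hq
      have hpA : p ∈ affineSpan ℝ S := subset_affineSpan ℝ S hp
      have hqA : q ∈ affineSpan ℝ S := subset_affineSpan ℝ S hq
      have hv : q -ᵥ p ∈ (affineSpan ℝ S).direction :=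
        AffineSubspace.vsub_mem_direction hqA hpA
      have : (q -ᵥ p) +ᵥ p ∈ AffineSubspace.mk' p W' :=
        AffineSubspace.vadd_mem_mk' p (hW'le hv)
      simpa using this
end

section
/- Let d ≥ 2 and let u > v ≥ 1 be integers. Let P = {(i_1,…,i_d) ∈ ℤ^d : 0 ≤ i_j ≤ u−1 for 1 ≤ j ≤ d−1, and 0 ≤ i_d ≤ duv−1}, so |P| = d·u^d·v. Then every hyperplane of the form x_d = a_1x_1 + a_2x_2 + ⋯ + a_{d−1}x_{d−1} + a_d with integer coefficients satisfying 0 ≤ a_i ≤ v−1 for 1 ≤ i ≤ d−1 and 0 ≤ a_d ≤ uv−1 contains at least u^{d−1} points of P; consequently, with k = u^{d−1} and n = |P| = d·u^d·v, the number of k-rich hyperplanes with respect to P is at least u·v^d = n^d/(d^d·k^{d+1}). -/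
/-!
Over every point of the base box `{0, …, u-1}^{d-1}` the hyperplane
`x_d = a_1 x_1 + ⋯ + a_{d-1} x_{d-1} + a_d` has height at most
`(d-1)(v-1)(u-1) + uv - 1 < duv`, so lifting the base box onto the hyperplane produces `u^{d-1}`
points of the grid on it. Distinct coefficient vectors give distinct hyperplanes, which yields
`v^{d-1} · uv = uv^d` rich hyperplanes; the final identity is the exponent count
`d · d = (d-1)(d+1) + 1`.
-/

open Finset Module

noncomputable section

section Grid

variable {ι : Type*}

def natPoint (m : ι → ℕ) : EuclideanSpace ℝ ι := WithLp.toLp 2 fun j => (m j : ℝ)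

lemma natPoint_injective : Function.Injective (natPoint (ι := ι)) := fun _ _ h =>
  funext fun j => Nat.cast_injective (congrArg (· j) h)

def gridBox (N : ι → ℕ) : Set (EuclideanSpace ℝ ι) :=
  {x | ∀ j, ∃ m : ℕ, x j = m ∧ m < N j}

variable [Fintype ι] [DecidableEq ι]

lemma gridBox_eq_image (N : ι → ℕ) :
    gridBox N = natPoint '' ↑(Fintype.piFinset fun j => range (N j)) := by
  ext x
  simp only [gridBox, Set.mem_ofPred_eq, Set.mem_image, mem_coe, Fintype.mem_piFinset, mem_range]
  constructor
  · intro h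
    choose m hm using h
    exact ⟨m, fun j => (hm j).2, congrArg (WithLp.toLp 2) (funext fun j => (hm j).1.symm)⟩
  · rintro ⟨m, hm, rfl⟩
    exact fun j => ⟨m j, rfl, hm j⟩

lemma natPoint_mem_gridBox {N m : ι → ℕ} : natPoint m ∈ gridBox N ↔ ∀ j, m j < N j := by
  simp [gridBox_eq_image, natPoint_injective.eq_iff]

lemma gridBox_finite (N : ι → ℕ) : (gridBox N).Finite := by
  rw [gridBox_eq_image]
  exact Set.Finite.image _ (finite_toSet _)

lemma ncard_gridBox (N : ι → ℕ) : (gridBox N).ncard = ∏ j, N j := by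
  rw [gridBox_eq_image, Set.ncard_image_of_injective _ natPoint_injective, Set.ncard_coe_finset,
    Fintype.card_piFinset]
  simp

end Grid

lemma prod_ite_eq_mul_pow {ι M : Type*} [Fintype ι] [DecidableEq ι] [CommMonoid M] (L : ι)
    (x y : M) : ∏ j, (if j = L then x else y) = x * y ^ (Fintype.card ι - 1) := by
  rw [← mul_prod_erase univ _ (mem_univ L), if_pos rfl,
    prod_congr rfl fun j hj => if_neg (ne_of_mem_erase hj), prod_const,
    card_erase_of_mem (mem_univ L), card_univ]

section Hyperplane

variable {ι : Type*} [Fintype ι] [DecidableEq ι] (L : ι)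

def graphFunctional (a : ι → ℝ) : Dual ℝ (EuclideanSpace ℝ ι) :=
  PiLp.projₗ (𝕜 := ℝ) 2 (fun _ : ι => ℝ) L - ∑ j ∈ univ.erase L, a j • PiLp.projₗ 2 _ j

variable {L}

lemma graphFunctional_apply (a : ι → ℝ) (x : EuclideanSpace ℝ ι) :
    graphFunctional L a x = x L - ∑ j ∈ univ.erase L, a j * x j := by
  simp [graphFunctional]

lemma graphFunctional_single_self (a : ι → ℝ) (t : ℝ) :
    graphFunctional L a (EuclideanSpace.single L t) = t := by
  rw [graphFunctional_apply, PiLp.single_eq_same, sub_eq_self]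
  exact sum_eq_zero fun j hj => by rw [PiLp.single_eq_of_ne _ (ne_of_mem_erase hj), mul_zero]

lemma graphFunctional_single_of_ne (a : ι → ℝ) {i : ι} (hi : i ≠ L) (t : ℝ) :
    graphFunctional L a (EuclideanSpace.single i t) = - (a i * t) := by
  rw [graphFunctional_apply, PiLp.single_eq_of_ne _ hi.symm, zero_sub,
    sum_eq_single_of_mem i (mem_erase.2 ⟨hi, mem_univ _⟩), PiLp.single_eq_same]
  intro j _ hj
  rw [PiLp.single_eq_of_ne _ hj, mul_zero]

variable (L) in
/-- The hyperplane `x_L = ∑_{j ≠ L} a_j x_j + a_L`: the entry `a_L` is the constant term. -/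
def graphHyperplane (a : ι → ℝ) : AffineSubspace ℝ (EuclideanSpace ℝ ι) :=
  AffineSubspace.mk' (EuclideanSpace.single L (a L)) (LinearMap.ker (graphFunctional L a))

lemma mem_graphHyperplane_iff_graphFunctional {a : ι → ℝ} {x : EuclideanSpace ℝ ι} :
    x ∈ graphHyperplane L a ↔ graphFunctional L a x = a L := by
  rw [graphHyperplane, AffineSubspace.mem_mk', LinearMap.mem_ker, vsub_eq_sub, map_sub,
    graphFunctional_single_self, sub_eq_zero]

lemma mem_graphHyperplane {a : ι → ℝ} {x : EuclideanSpace ℝ ι} :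
    x ∈ graphHyperplane L a ↔ x L = ∑ j ∈ univ.erase L, a j * x j + a L := by
  rw [mem_graphHyperplane_iff_graphFunctional, graphFunctional_apply, sub_eq_iff_eq_add']

lemma finrank_direction_graphHyperplane (a : ι → ℝ) :
    finrank ℝ (graphHyperplane L a).direction = Fintype.card ι - 1 := by
  have hne : graphFunctional L a ≠ 0 := fun h => by
    simpa [h] using graphFunctional_single_self (L := L) a 1
  rw [graphHyperplane, AffineSubspace.direction_mk', ← finrank_euclideanSpace (𝕜 := ℝ),
    ← Module.Dual.finrank_ker_add_one_of_ne_zero hne, Nat.add_sub_cancel]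

lemma graphHyperplane_injective : Function.Injective (graphHyperplane L) := by
  intro a b hab
  have hmem : ∀ x, graphFunctional L a x = a L → graphFunctional L b x = b L := fun x hx => by
    rw [← mem_graphHyperplane_iff_graphFunctional, ← hab, mem_graphHyperplane_iff_graphFunctional]
    exact hx
  have hL : a L = b L := by
    simpa [graphFunctional_single_self] using hmem _ (graphFunctional_single_self a (a L))
  funext i
  by_cases hi : i = L
  · rw [hi, hL]
  · have := hmem (EuclideanSpace.single i 1 + EuclideanSpace.single L (a i + a L)) (by
      rw [map_add, graphFunctional_single_of_ne a hi, graphFunctional_single_self]; ring)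
    rw [map_add, graphFunctional_single_of_ne b hi, graphFunctional_single_self] at this
    linarith

lemma prod_le_ncard_gridBox_inter_graphHyperplane (N a : ι → ℕ)
    (h : ∑ j ∈ univ.erase L, a j * (N j - 1) + a L < N L) :
    ∏ j ∈ univ.erase L, N j ≤ (gridBox N ∩ graphHyperplane L (fun j => a j)).ncard := by
  -- `T` is the base box `∏_{j ≠ L} [0, N j)` placed in `m_L = 0`; `lift` raises it onto the
  -- hyperplane.
  set T := Fintype.piFinset fun j => if j = L then {0} else range (N j)
  set lift : (ι → ℕ) → (ι → ℕ) :=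
    fun m => Function.update m L (∑ j ∈ univ.erase L, a j * m j + a L)
  have hlift_ne : ∀ m, ∀ j ≠ L, lift m j = m j := fun m j hj => Function.update_of_ne hj _ _
  have hcard : T.card = ∏ j ∈ univ.erase L, N j := by
    rw [Fintype.card_piFinset, ← mul_prod_erase univ _ (mem_univ L), if_pos rfl, card_singleton,
      one_mul]
    exact prod_congr rfl fun j hj => by rw [if_neg (ne_of_mem_erase hj), card_range]
  have hinj : Set.InjOn (natPoint ∘ lift) T := by
    intro m hm m' hm' hmm'
    have hlift := natPoint_injective hmm'
    funext j
    by_cases hj : j = L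
    · have hzero : ∀ m ∈ T, m L = 0 := fun m hm => by simpa using Fintype.mem_piFinset.1 hm L
      rw [hj, hzero m hm, hzero m' hm']
    · rw [← hlift_ne m j hj, ← hlift_ne m' j hj, hlift]
  have hsub : (natPoint ∘ lift) '' T ⊆ gridBox N ∩ graphHyperplane L (fun j => a j) := by
    rintro _ ⟨m, hm, rfl⟩
    simp only [T, mem_coe, Fintype.mem_piFinset] at hm
    have hm_lt : ∀ j ≠ L, m j < N j := fun j hj => by simpa [hj] using hm j
    refine ⟨natPoint_mem_gridBox.2 fun j => ?_, mem_graphHyperplane.2 ?_⟩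
    · by_cases hj : j = L
      · subst hj
        refine lt_of_le_of_lt ?_ h
        simp only [lift, Function.update_self]
        gcongr with i hi
        exact Nat.le_sub_one_of_lt (hm_lt i (ne_of_mem_erase hi))
      · rw [hlift_ne m j hj]
        exact hm_lt j hj
    · simp only [natPoint, Function.comp_apply, PiLp.toLp_apply, lift, Function.update_self]
      push_cast
      congr 1
      exact sum_congr rfl fun j hj => by rw [Function.update_of_ne (ne_of_mem_erase hj)]
  calc ∏ j ∈ univ.erase L, N j = ((natPoint ∘ lift) '' T).ncard := by
        rw [hinj.ncard_image, Set.ncard_coe_finset, hcard]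
    _ ≤ _ := Set.ncard_le_ncard hsub ((gridBox_finite N).inter_of_left _)

lemma pow_le_ncard_inter_graphHyperplane (u v : ℕ) (a : ι → ℕ) (ha : ∀ j ≠ L, a j < v)
    (haL : a L < u * v) :
    u ^ (Fintype.card ι - 1) ≤ (gridBox (fun j => if j = L then Fintype.card ι * u * v else u) ∩
      graphHyperplane L (fun j => a j)).ncard := by
  have hcard : 1 ≤ Fintype.card ι := Fintype.card_pos_iff.2 ⟨L⟩
  have hbound : ∑ j ∈ univ.erase L, a j * ((if j = L then Fintype.card ι * u * v else u) - 1)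
      + a L < Fintype.card ι * u * v := by
    calc _ ≤ ∑ _j ∈ univ.erase L, u * v + a L := by
          gcongr ∑ _j ∈ univ.erase L, ?_ + _ with j hj
          rw [if_neg (ne_of_mem_erase hj), mul_comm u]
          exact Nat.mul_le_mul (ha j (ne_of_mem_erase hj)).le (Nat.sub_le u 1)
      _ < (Fintype.card ι - 1) * (u * v) + u * v := by
          rw [sum_const, card_erase_of_mem (mem_univ L), card_univ, smul_eq_mul]
          omega
      _ = Fintype.card ι * u * v := by
          rw [← Nat.succ_mul, Nat.succ_eq_add_one, Nat.sub_add_cancel hcard, mul_assoc]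
  have hprod : ∏ j ∈ univ.erase L, (if j = L then Fintype.card ι * u * v else u) =
      u ^ (Fintype.card ι - 1) := by
    rw [prod_congr rfl fun j hj => if_neg (ne_of_mem_erase hj), prod_const,
      card_erase_of_mem (mem_univ L), card_univ]
  rw [← hprod]
  exact prod_le_ncard_gridBox_inter_graphHyperplane
    (fun j => if j = L then Fintype.card ι * u * v else u) a (by rwa [if_pos rfl])

variable (L) in
lemma exists_rich_graphHyperplanes (u v : ℕ) :
    ∃ H : Finset (AffineSubspace ℝ (EuclideanSpace ℝ ι)), u * v ^ Fintype.card ι ≤ H.card ∧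
      ∀ h ∈ H, finrank ℝ h.direction = Fintype.card ι - 1 ∧
        u ^ (Fintype.card ι - 1) ≤
          (gridBox (fun j => if j = L then Fintype.card ι * u * v else u) ∩ h).ncard := by
  classical
  have hcard : 1 ≤ Fintype.card ι := Fintype.card_pos_iff.2 ⟨L⟩
  have hinj : Function.Injective fun a : ι → ℕ => graphHyperplane L fun j => (a j : ℝ) :=
    graphHyperplane_injective.comp fun a b h => funext fun j => Nat.cast_injective (congrFun h j)
  set A := Fintype.piFinset fun j => range (if j = L then u * v else v)
  refine ⟨A.image fun a => graphHyperplane L fun j => (a j : ℝ), ?_, ?_⟩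
  · rw [card_image_of_injective _ hinj, Fintype.card_piFinset]
    simp only [apply_ite, card_range]
    rw [prod_ite_eq_mul_pow, mul_assoc, ← pow_succ', Nat.sub_add_cancel hcard]
  · simp only [mem_image]
    rintro _ ⟨a, ha, rfl⟩
    rw [Fintype.mem_piFinset] at ha
    exact ⟨finrank_direction_graphHyperplane _, pow_le_ncard_inter_graphHyperplane u v a
      (fun j hj => by simpa [hj] using ha j) (by simpa using ha L)⟩

end Hyperplane

section LastCoordinate

variable {d : ℕ} {L : Fin d}

lemma val_lt_sub_one_iff_ne (hL : (L : ℕ) = d - 1) (j : Fin d) : (j : ℕ) < d - 1 ↔ j ≠ L := by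
  have := j.isLt
  rw [Ne, Fin.ext_iff, hL]
  omega

lemma filter_val_lt_sub_one_eq_erase (hL : (L : ℕ) = d - 1) :
    univ.filter (fun j : Fin d => (j : ℕ) < d - 1) = univ.erase L := by
  simp_rw [val_lt_sub_one_iff_ne hL]
  exact filter_ne' _ _

lemma setOf_le_sub_one_eq_gridBox (hL : (L : ℕ) = d - 1) {A B : ℕ} (hA : 0 < A) (hB : 0 < B) :
    {x : EuclideanSpace ℝ (Fin d) | ∀ j : Fin d, ∃ m : ℕ,
      x j = (m : ℝ) ∧ (if (j : ℕ) < d - 1 then m ≤ A - 1 else m ≤ B - 1)} =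
      gridBox fun j => if j = L then B else A := by
  ext x
  refine forall_congr' fun j => exists_congr fun m => and_congr_right' ?_
  by_cases hj : j = L <;> simp [hj, val_lt_sub_one_iff_ne hL] <;> omega

lemma setOf_eq_graphHyperplane (hL : (L : ℕ) = d - 1) (a : Fin d → ℝ) :
    {x : EuclideanSpace ℝ (Fin d) |
      x L = ∑ j ∈ univ.filter (fun j : Fin d => (j : ℕ) < d - 1), a j * x j + a L} =
      graphHyperplane L a := by
  ext x
  rw [Set.mem_ofPred_eq, SetLike.mem_coe, mem_graphHyperplane, filter_val_lt_sub_one_eq_erase hL]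

end LastCoordinate

lemma mul_pow_eq_div_pow_mul_pow {d : ℕ} (hd : d ≠ 0) {c u v : ℝ} (hc : c ≠ 0) (hu : u ≠ 0) :
    u * v ^ d = (c * u ^ d * v) ^ d / (c ^ d * (u ^ (d - 1)) ^ (d + 1)) := by
  have hexp : d * d = (d - 1) * (d + 1) + 1 := by
    obtain ⟨e, rfl⟩ : ∃ e, d = e + 1 := ⟨d - 1, by omega⟩
    rw [Nat.add_sub_cancel]
    ring
  rw [eq_div_iff (by positivity), mul_pow, mul_pow, ← pow_mul, ← pow_mul, hexp, pow_succ]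
  ring

/-- **First upper bound construction (richness).** For `d ≥ 2` and integers `u > v ≥ 1`, let
`P` be the `u × ⋯ × u × duv` integer grid in `ℝ^d`, so `|P| = d·u^d·v`. Every hyperplane
`x_d = a_1 x_1 + ⋯ + a_{d-1} x_{d-1} + a_d` with integer coefficients `0 ≤ a_i ≤ v-1`
(`1 ≤ i ≤ d-1`) and `0 ≤ a_d ≤ uv-1` contains at least `u^{d-1}` points of `P`; consequently,
with `k = u^{d-1}` and `n = d·u^d·v`, there are at least `u·v^d = n^d/(d^d·k^{d+1})` `k`-rich
hyperplanes with respect to `P`. -/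
theorem stmt_10 (d u v : ℕ) (hd : 2 ≤ d) (hvu : v < u) (hv : 1 ≤ v)
    (P : Set (EuclideanSpace ℝ (Fin d)))
    (hP : P = {x : EuclideanSpace ℝ (Fin d) | ∀ j : Fin d, ∃ m : ℕ,
      x j = (m : ℝ) ∧ (if (j : ℕ) < d - 1 then m ≤ u - 1 else m ≤ d * u * v - 1)}) :
    P.ncard = d * u ^ d * v ∧
    (∀ a : Fin d → ℕ,
      (∀ j : Fin d, (j : ℕ) < d - 1 → a j ≤ v - 1) →
      a ⟨d - 1, by omega⟩ ≤ u * v - 1 →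
      u ^ (d - 1) ≤ (P ∩ {x : EuclideanSpace ℝ (Fin d) |
        x ⟨d - 1, by omega⟩ =
          (∑ j ∈ Finset.univ.filter (fun j : Fin d => (j : ℕ) < d - 1), (a j : ℝ) * x j)
            + (a ⟨d - 1, by omega⟩ : ℝ)}).ncard) ∧
    (∃ H : Finset (AffineSubspace ℝ (EuclideanSpace ℝ (Fin d))),
      u * v ^ d ≤ H.card ∧
      (∀ h ∈ H, Module.finrank ℝ h.direction = d - 1 ∧
        u ^ (d - 1) ≤ (P ∩ (h : Set (EuclideanSpace ℝ (Fin d)))).ncard)) ∧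
    ((u * v ^ d : ℝ) =
      ((d * u ^ d * v : ℕ) : ℝ) ^ d / ((d : ℝ) ^ d * ((u : ℝ) ^ (d - 1)) ^ (d + 1))) := by
  set L : Fin d := ⟨d - 1, by omega⟩
  have hL : (L : ℕ) = d - 1 := rfl
  have hPbox : P = gridBox fun j => if j = L then Fintype.card (Fin d) * u * v else u := by
    rw [hP, Fintype.card_fin]
    exact setOf_le_sub_one_eq_gridBox hL (by omega)
      (Nat.mul_pos (Nat.mul_pos (by omega) (by omega)) hv)
  refine ⟨?_, fun a ha haL => ?_, ?_, ?_⟩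
  · rw [hPbox, ncard_gridBox, prod_ite_eq_mul_pow, Fintype.card_fin,
      ← pow_sub_one_mul (by omega : d ≠ 0)]
    ring
  · have huv : 0 < u * v := Nat.mul_pos (by omega) hv
    rw [hPbox, setOf_eq_graphHyperplane hL]
    simpa only [Fintype.card_fin] using pow_le_ncard_inter_graphHyperplane u v a
      (fun j hj => by have := ha j ((val_lt_sub_one_iff_ne hL j).2 hj); omega) (by omega)
  · simpa only [hPbox, Fintype.card_fin] using exists_rich_graphHyperplanes L u v
  · push_cast
    exact mul_pow_eq_div_pow_mul_pow (by omega) (Nat.cast_ne_zero.2 (by omega))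
      (Nat.cast_ne_zero.2 (by omega))

end
end

section
/- Let d ≥ 3 and let u > v ≥ 1 be integers, and let P = {(i_1,…,i_d) ∈ ℤ^d : 0 ≤ i_j ≤ u−1 for 1 ≤ j ≤ d−1, and 0 ≤ i_d ≤ duv−1}. Then: (a) every (d−2)-flat in ℝ^d that is not parallel to the x_d-axis contains at most u^{d−2} points of P, and (b) every (d−2)-flat parallel to the x_d-axis contains at most u^{d−3}·duv = d·v·u^{d−2} points of P. In particular, every (d−2)-flat contains at most d·v·u^{d−2} points of P. -/
/-!
If the coordinates indexed by `J` vanish simultaneously only at `0` on the direction of a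
`k`-flat `f`, then the corresponding coordinate functionals span the dual of the direction, so
already `k` of them, indexed by some `I ⊆ J`, do. The projection to the coordinates in `I` is
then injective on `f`, and a grid of side lengths `bnd i` meets `f` in at most `∏ i ∈ I, bnd i`
points. For a flat not parallel to the last axis one may take `J` to omit the last coordinate,
whence the bound `u ^ (d - 2)`; in general at most one factor is the long side `d u v`.
-/

open Module

theorem Module.Dual.exists_finset_card_le_finrank {K V ι : Type*} [Field K] [AddCommGroup V]
    [Module K V] [FiniteDimensional K V] [Finite ι] (φ : ι → Dual K V) (J : Set ι)
    (hJ : ∀ v, (∀ i ∈ J, φ i v = 0) → v = 0) :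
    ∃ I : Finset ι, ↑I ⊆ J ∧ I.card ≤ finrank K V ∧ ∀ v, (∀ i ∈ I, φ i v = 0) → v = 0 := by
  classical
  have := Fintype.ofFinite ι
  obtain ⟨b, hbJ, -, hspan, hli⟩ :=
    exists_linearIndepOn_extension (linearIndepOn_empty K φ) (Set.empty_subset J)
  refine ⟨b.toFinset, by simpa using hbJ, ?_, fun v hv => hJ v fun j hj => ?_⟩
  · rw [← Subspace.dual_finrank_eq, Set.toFinset_card]
    exact hli.fintype_card_le_finrank
  · have hker : Submodule.span K (φ '' b) ≤ LinearMap.ker (Dual.eval K V v) :=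
      Submodule.span_le.mpr fun _ ⟨i, hi, hφi⟩ => hφi ▸ hv i (by simpa using hi)
    exact hker (hspan ⟨j, hj, rfl⟩)

theorem AffineSubspace.ncard_inter_le_prod_card {K E ι : Type*} [Field K] [AddCommGroup E]
    [Module K E] (f : AffineSubspace K E) (φ : ι → Dual K E) (I : Finset ι)
    (hI : ∀ v ∈ f.direction, (∀ i ∈ I, φ i v = 0) → v = 0) (S : ι → Finset K) (P : Set E)
    (hP : ∀ x ∈ P, ∀ i ∈ I, φ i x ∈ S i) :
    (P ∩ f).ncard ≤ ∏ i ∈ I, (S i).card := by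
  classical
  have hmaps : ∀ x ∈ P ∩ f,
      (fun i : I => φ i x) ∈ (Fintype.piFinset fun i : I => S i : Set (I → K)) :=
    fun x hx => by simpa using fun i hi => hP x hx.1 i hi
  have hinj : Set.InjOn (fun x (i : I) => φ i x) (P ∩ f) := by
    intro x hx y hy hxy
    refine sub_eq_zero.mp (hI _ (f.vsub_mem_direction hx.2 hy.2) fun i hi => ?_)
    simpa [sub_eq_zero] using congrFun hxy ⟨i, hi⟩
  calc (P ∩ f).ncard ≤ (Fintype.piFinset fun i : I => S i : Set (I → K)).ncard :=
        Set.ncard_le_ncard_of_injOn _ hmaps hinj (Finset.finite_toSet _)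
    _ = ∏ i ∈ I, (S i).card := by
        rw [Set.ncard_coe_finset, Fintype.card_piFinset,
          Finset.prod_coe_sort I fun i => (S i).card]

theorem EuclideanSpace.eq_zero_of_single_notMem {𝕜 ι : Type*} [RCLike 𝕜] [Fintype ι]
    [DecidableEq ι] {V : Submodule 𝕜 (EuclideanSpace 𝕜 ι)} {i : ι}
    (hi : EuclideanSpace.single i 1 ∉ V) {v : EuclideanSpace 𝕜 ι} (hv : v ∈ V)
    (hvi : ∀ j ∈ ({i}ᶜ : Set ι), v j = 0) : v = 0 := by
  have hsingle : v = v i • EuclideanSpace.single i 1 := by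
    ext j
    by_cases hj : j = i
    · simp [hj]
    · simp [hj, hvi j hj]
  by_cases h0 : v i = 0
  · rw [hsingle, h0, zero_smul]
  · have hscaled : (v i)⁻¹ • v = EuclideanSpace.single i 1 := by
      nth_rw 2 [hsingle]
      rw [smul_smul, inv_mul_cancel₀ h0, one_smul]
    exact absurd (hscaled ▸ V.smul_mem _ hv) hi

theorem Finset.prod_le_pow_mul {ι : Type*} [DecidableEq ι] (I : Finset ι) (b : ι → ℕ) (i₀ : ι)
    {u B k : ℕ} (hu : 1 ≤ u) (huB : u ≤ B) (hb : ∀ i ≠ i₀, b i ≤ u) (hb₀ : b i₀ ≤ B)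
    (hI : I.card ≤ k + 1) : ∏ i ∈ I, b i ≤ u ^ k * B := by
  by_cases h₀ : i₀ ∈ I
  · calc ∏ i ∈ I, b i = b i₀ * ∏ i ∈ I.erase i₀, b i := (mul_prod_erase I b h₀).symm
      _ ≤ B * u ^ (I.erase i₀).card := by
          gcongr
          exact prod_le_pow_card _ _ _ fun i hi => hb i (ne_of_mem_erase hi)
      _ ≤ B * u ^ k :=
          Nat.mul_le_mul_left _ (Nat.pow_le_pow_right hu (by rw [card_erase_of_mem h₀]; omega))
      _ = u ^ k * B := mul_comm _ _
  · calc ∏ i ∈ I, b i ≤ u ^ I.card :=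
          prod_le_pow_card _ _ _ fun i hi => hb i fun h => h₀ (h ▸ hi)
      _ ≤ u ^ (k + 1) := Nat.pow_le_pow_right hu hI
      _ ≤ u ^ k * B := by rw [pow_succ]; gcongr

namespace AffineSubspace

variable {ι : Type*} [Fintype ι] {P : Set (EuclideanSpace ℝ ι)} {bnd : ι → ℕ}
  (f : AffineSubspace ℝ (EuclideanSpace ℝ ι))

theorem exists_ncard_grid_inter_le_prod (hP : ∀ x ∈ P, ∀ i, ∃ m < bnd i, x i = m) (J : Set ι)
    (hJ : ∀ w ∈ f.direction, (∀ i ∈ J, w i = 0) → w = 0) :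
    ∃ I : Finset ι, ↑I ⊆ J ∧ I.card ≤ finrank ℝ f.direction ∧
      (P ∩ f).ncard ≤ ∏ i ∈ I, bnd i := by
  let φ : ι → Dual ℝ (EuclideanSpace ℝ ι) := fun i =>
    (EuclideanSpace.proj i : StrongDual ℝ (EuclideanSpace ℝ ι))
  let S : ι → Finset ℝ := fun i => (Finset.range (bnd i)).image Nat.cast
  obtain ⟨I, hIJ, hcard, hI⟩ := Dual.exists_finset_card_le_finrank
    (fun i => (φ i).domRestrict f.direction) J fun v hv => Subtype.ext (hJ v v.2 hv)
  have hPS : ∀ x ∈ P, ∀ i ∈ I, φ i x ∈ S i := fun x hx i _ => by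
    obtain ⟨m, hm, hxm⟩ := hP x hx i
    exact Finset.mem_image.mpr ⟨m, Finset.mem_range.mpr hm, hxm.symm⟩
  refine ⟨I, hIJ, hcard, (f.ncard_inter_le_prod_card φ I
    (fun v hv h => congrArg Subtype.val (hI ⟨v, hv⟩ h)) S P hPS).trans_eq ?_⟩
  refine Finset.prod_congr rfl fun i _ => ?_
  rw [Finset.card_image_of_injective _ Nat.cast_injective, Finset.card_range]

theorem ncard_grid_inter_le_pow_finrank [DecidableEq ι]
    (hP : ∀ x ∈ P, ∀ i, ∃ m < bnd i, x i = m) {i₀ : ι} {u : ℕ} (hu : 1 ≤ u)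
    (hb : ∀ i ≠ i₀, bnd i ≤ u) (h₀ : EuclideanSpace.single i₀ 1 ∉ f.direction) :
    (P ∩ f).ncard ≤ u ^ finrank ℝ f.direction := by
  obtain ⟨I, hIJ, hI, hcount⟩ := f.exists_ncard_grid_inter_le_prod hP {i₀}ᶜ
    fun w hw => EuclideanSpace.eq_zero_of_single_notMem h₀ hw
  calc (P ∩ f).ncard ≤ ∏ i ∈ I, bnd i := hcount
    _ ≤ u ^ I.card := Finset.prod_le_pow_card _ _ _ fun i hi => hb i (hIJ hi)
    _ ≤ u ^ finrank ℝ f.direction := Nat.pow_le_pow_right hu hI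

theorem ncard_grid_inter_le_pow_mul [DecidableEq ι]
    (hP : ∀ x ∈ P, ∀ i, ∃ m < bnd i, x i = m) {i₀ : ι} {u B k : ℕ} (hu : 1 ≤ u) (huB : u ≤ B)
    (hb : ∀ i ≠ i₀, bnd i ≤ u) (hb₀ : bnd i₀ ≤ B) (hk : finrank ℝ f.direction ≤ k + 1) :
    (P ∩ f).ncard ≤ u ^ k * B := by
  obtain ⟨I, -, hI, hcount⟩ := f.exists_ncard_grid_inter_le_prod hP Set.univ
    fun w _ hw => by ext i; exact hw i trivial
  exact hcount.trans (I.prod_le_pow_mul bnd i₀ hu huB hb hb₀ (hI.trans hk))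

end AffineSubspace

/-- **First upper bound construction (flat bound).** For `d ≥ 3` and integers `u > v ≥ 1`,
let `P` be the `u × ⋯ × u × duv` integer grid in `ℝ^d`. Then (a) every `(d-2)`-flat not
parallel to the `x_d`-axis contains at most `u^{d-2}` points of `P`; (b) every `(d-2)`-flat
parallel to the `x_d`-axis contains at most `u^{d-3}·duv = d·v·u^{d-2}` points of `P`;
in particular every `(d-2)`-flat contains at most `d·v·u^{d-2}` points of `P`.
(A flat is parallel to the `x_d`-axis if its direction contains the basis vector `e_d`.) -/
theorem stmt_11 (d u v : ℕ) (hd : 3 ≤ d) (hvu : v < u) (hv : 1 ≤ v)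
    (P : Set (EuclideanSpace ℝ (Fin d)))
    (hP : P = {x : EuclideanSpace ℝ (Fin d) | ∀ j : Fin d, ∃ m : ℕ,
      x j = (m : ℝ) ∧ (if (j : ℕ) < d - 1 then m ≤ u - 1 else m ≤ d * u * v - 1)}) :
    (∀ f : AffineSubspace ℝ (EuclideanSpace ℝ (Fin d)),
      Module.finrank ℝ f.direction = d - 2 →
      EuclideanSpace.single (⟨d - 1, by omega⟩ : Fin d) (1 : ℝ) ∉ f.direction →
      (P ∩ (f : Set (EuclideanSpace ℝ (Fin d)))).ncard ≤ u ^ (d - 2)) ∧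
    (∀ f : AffineSubspace ℝ (EuclideanSpace ℝ (Fin d)),
      Module.finrank ℝ f.direction = d - 2 →
      EuclideanSpace.single (⟨d - 1, by omega⟩ : Fin d) (1 : ℝ) ∈ f.direction →
      (P ∩ (f : Set (EuclideanSpace ℝ (Fin d)))).ncard ≤ u ^ (d - 3) * (d * u * v)) ∧
    (∀ f : AffineSubspace ℝ (EuclideanSpace ℝ (Fin d)),
      Module.finrank ℝ f.direction = d - 2 →
      (P ∩ (f : Set (EuclideanSpace ℝ (Fin d)))).ncard ≤ d * v * u ^ (d - 2)) := by
  have hu : 1 ≤ u := by omega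
  have hudv : u ≤ d * u * v := calc
    u = 1 * u * 1 := by ring
    _ ≤ d * u * v := by gcongr; omega
  set last : Fin d := ⟨d - 1, by omega⟩
  set bnd : Fin d → ℕ := fun i => if (i : ℕ) < d - 1 then u else d * u * v with hbnd
  have hb : ∀ i ≠ last, bnd i ≤ u := fun i hi => by
    have : (i : ℕ) ≠ d - 1 := fun h => hi (Fin.ext h)
    simp only [hbnd]; split_ifs <;> omega
  have hb₀ : bnd last ≤ d * u * v := by simp [hbnd, last]
  have hPb : ∀ x ∈ P, ∀ i, ∃ m < bnd i, x i = m := fun x hx i => by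
    obtain ⟨m, hxm, hm⟩ := (hP ▸ hx) i
    exact ⟨m, by simp only [hbnd]; split_ifs at hm ⊢ <;> omega, hxm⟩
  have parta : ∀ f : AffineSubspace ℝ (EuclideanSpace ℝ (Fin d)), finrank ℝ f.direction = d - 2 →
      EuclideanSpace.single last (1 : ℝ) ∉ f.direction → (P ∩ f).ncard ≤ u ^ (d - 2) :=
    fun f hf h₀ => hf ▸ f.ncard_grid_inter_le_pow_finrank hPb hu hb h₀
  have partb : ∀ f : AffineSubspace ℝ (EuclideanSpace ℝ (Fin d)), finrank ℝ f.direction = d - 2 →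
      (P ∩ f).ncard ≤ u ^ (d - 3) * (d * u * v) :=
    fun f hf => f.ncard_grid_inter_le_pow_mul hPb hu hudv hb hb₀ (by omega)
  refine ⟨parta, fun f hf _ => partb f hf, fun f hf => ?_⟩
  by_cases h₀ : EuclideanSpace.single last (1 : ℝ) ∈ f.direction
  · calc (P ∩ f).ncard ≤ u ^ (d - 3) * (d * u * v) := partb f hf
      _ = d * v * u ^ (d - 3 + 1) := by ring
      _ = d * v * u ^ (d - 2) := by rw [show d - 3 + 1 = d - 2 by omega]
  · exact (parta f hf h₀).trans (Nat.le_mul_of_pos_left _ (by positivity))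
end
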